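/- arXiv:2602.14855 — 7 statements merged into one kernel-verified Lean document; each statement's English description precedes it below -/
import Mathlib

section
/- For finite sets A, B, C with A, B nonempty, if an element x ∉ A is added to A to form Ã = A ∪ {x}, then |F*(A,C) - F*(Ã,C)| ≤ 1/|A|. -/
open Finset

variable {α : Type*} [DecidableEq α]

/-- Jaccard similarity of two finite sets. -/
noncomputable def jac (A B : Finset α) : ℝ :=
  ((A ∩ B).card : ℝ) / ((A ∪ B).card : ℝ)

/-- Jaccard similarity with the convention `jacc ∅ ∅ = 1`. -/
noncomputable def jacc (A B : Finset α) : ℝ :=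
  if A = ∅ ∧ B = ∅ then 1 else jac A B

/-- Best match score of a cluster `A` against a clustering `𝒞` (0 if `𝒞 = ∅`). -/
noncomputable def bestMatch (A : Finset α) (𝒞 : Finset (Finset α)) : ℝ :=
  if h : 𝒞.Nonempty then 𝒞.sup' h (fun C => jac A C) else 0

/-- Weighted average best-match score `F̂*_w`. -/
noncomputable def fhatw (𝒞 𝒟 : Finset (Finset α)) : ℝ :=
  ∑ C ∈ 𝒞, ((C.card : ℝ) / (∑ C' ∈ 𝒞, (C'.card : ℝ))) * bestMatch C 𝒟

/-- Symmetric score `F*_w`. -/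
noncomputable def fw (𝒞 𝒟 : Finset (Finset α)) : ℝ :=
  0.5 * fhatw 𝒞 𝒟 + 0.5 * fhatw 𝒟 𝒞

/-- Outlier set of a clustering of `X`. -/
def outliers (X : Finset α) (𝒞 : Finset (Finset α)) : Finset α :=
  X \ 𝒞.biUnion id

/-- Outlier-aware one-directional score `F̂*_wo`. -/
noncomputable def fhatwo (X : Finset α) (𝒞 𝒟 : Finset (Finset α)) : ℝ :=
  ((outliers X 𝒞).card : ℝ) / (X.card : ℝ) * jacc (outliers X 𝒞) (outliers X 𝒟)
    + ((X \ outliers X 𝒞).card : ℝ) / (X.card : ℝ) * fhatw 𝒞 𝒟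

/-- Outlier-aware symmetric score `F*_wo`. -/
noncomputable def fwo (X : Finset α) (𝒞 𝒟 : Finset (Finset α)) : ℝ :=
  0.5 * fhatwo X 𝒞 𝒟 + 0.5 * fhatwo X 𝒟 𝒞

theorem stmt3 {α : Type*} [DecidableEq α] (A C : Finset α) (hA : A.Nonempty)
    (x : α) (hx : x ∉ A) :
    |jac A C - jac (insert x A) C| ≤ 1 / (A.card : ℝ) := by
  have hn : (0:ℝ) < A.card := by exact_mod_cast hA.card_pos
  have hu : (0:ℝ) < (A ∪ C).card := by
    exact_mod_cast Finset.card_pos.mpr (hA.mono Finset.subset_union_left)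
  have hnu : (A.card : ℝ) ≤ (A ∪ C).card := by
    exact_mod_cast Finset.card_le_card Finset.subset_union_left
  have han : ((A ∩ C).card : ℝ) ≤ A.card := by
    exact_mod_cast Finset.card_le_card Finset.inter_subset_left
  by_cases hxc : x ∈ C
  · have h1 : insert x A ∩ C = insert x (A ∩ C) := by
      ext y; by_cases hy : y = x <;>
        simp [hy, hxc, Finset.mem_insert, Finset.mem_inter]
    have h2 : insert x A ∪ C = A ∪ C := by
      ext y; by_cases hy : y = x <;>
        simp [hy, hxc, Finset.mem_insert, Finset.mem_union]
    have hxac : x ∉ A ∩ C := fun h => hx (Finset.mem_inter.mp h).1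
    have hc1 : ((insert x A ∩ C).card : ℝ) = (A ∩ C).card + 1 := by
      rw [h1, Finset.card_insert_of_notMem hxac]; push_cast; ring
    unfold jac
    rw [h2, hc1]
    rw [div_sub_div_same, abs_div]
    have : |((A ∩ C).card : ℝ) - ((A ∩ C).card + 1)| = 1 := by
      rw [abs_of_nonpos] <;> linarith
    rw [this, abs_of_pos hu]
    rw [div_le_div_iff₀ hu hn]
    linarith
  · have h1 : insert x A ∩ C = A ∩ C := by
      ext y; by_cases hy : y = x <;>
        simp [hy, hxc, hx, Finset.mem_insert, Finset.mem_inter]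
    have h2 : insert x A ∪ C = insert x (A ∪ C) := by
      ext y; simp [Finset.mem_insert, Finset.mem_union, or_assoc]
    have hxuc : x ∉ A ∪ C := by simp [hx, hxc]
    have hc2 : ((insert x A ∪ C).card : ℝ) = (A ∪ C).card + 1 := by
      rw [h2, Finset.card_insert_of_notMem hxuc]; push_cast; ring
    unfold jac
    rw [h1, hc2]
    set a := ((A ∩ C).card : ℝ) with ha
    set u := ((A ∪ C).card : ℝ) with huu
    have ha0 : 0 ≤ a := by positivity
    have key : a / u - a / (u + 1) = a / (u * (u + 1)) := by
      field_simp; ring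
    rw [key, abs_of_nonneg (by positivity)]
    rw [div_le_div_iff₀ (by positivity) hn]
    nlinarith
end

section
/- For finite nonempty sets A, C and x ∉ A with Ã = A ∪ {x}, the change in Jaccard similarity satisfies |F*(A,C) - F*(Ã,C)| ≤ 1/|C|. -/
open Finset

variable {α : Type*} [DecidableEq α]

theorem stmt4 {α : Type*} [DecidableEq α] (A C : Finset α)
    (hA : A.Nonempty) (hC : C.Nonempty) (x : α) (hx : x ∉ A) :
    |jac A C - jac (insert x A) C| ≤ 1 / (C.card : ℝ) := by
  have hCpos : 0 < (C.card : ℝ) := by exact_mod_cast hC.card_pos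
  have huc : (C.card : ℝ) ≤ ((A ∪ C).card : ℝ) := by
    exact_mod_cast Finset.card_le_card (Finset.subset_union_right)
  have hupos : 0 < ((A ∪ C).card : ℝ) := lt_of_lt_of_le hCpos huc
  have hac : ((A ∩ C).card : ℝ) ≤ (C.card : ℝ) := by
    exact_mod_cast Finset.card_le_card (Finset.inter_subset_right)
  by_cases hxC : x ∈ C
  · have hi : insert x A ∩ C = insert x (A ∩ C) := insert_inter_of_mem hxC
    have hU : insert x A ∪ C = A ∪ C := by
      rw [insert_union, insert_eq_self.mpr (mem_union_right _ hxC)]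
    have hxAC : x ∉ A ∩ C := by simp [hx]
    rw [jac, jac, hi, hU, card_insert_of_notMem hxAC]
    push_cast
    have : ((A ∩ C).card : ℝ) / ((A ∪ C).card : ℝ)
        - (((A ∩ C).card : ℝ) + 1) / ((A ∪ C).card : ℝ) = -(1 / ((A ∪ C).card : ℝ)) := by
      field_simp
      ring
    rw [this, abs_neg, abs_of_nonneg (by positivity)]
    exact one_div_le_one_div_of_le hCpos huc
  · have hi : insert x A ∩ C = A ∩ C := by
      ext y; simp only [mem_inter, mem_insert]
      constructor
      · rintro ⟨h1 | h1, h2⟩ <;> [exact absurd (h1 ▸ h2) hxC; exact ⟨h1, h2⟩]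
      · tauto
    have hxAC : x ∉ A ∪ C := by simp [hx, hxC]
    have hU : insert x A ∪ C = insert x (A ∪ C) := by
      ext y; simp only [mem_union, mem_insert]; tauto
    rw [jac, jac, hi, hU, card_insert_of_notMem hxAC]
    push_cast
    set a := ((A ∩ C).card : ℝ)
    set u := ((A ∪ C).card : ℝ)
    have ha0 : 0 ≤ a := by positivity
    have key : a / u - a / (u + 1) = a / (u * (u + 1)) := by
      field_simp; ring
    rw [key, abs_of_nonneg (by positivity), div_le_div_iff₀ (by positivity) hCpos]
    nlinarith [hac, huc, hCpos, ha0]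
end

section
/- For a cluster C₁ and a clustering 𝒞 (a finite set of nonempty finite subsets of X), define F*(C₁, 𝒞) = max over C ∈ 𝒞 of F*(C₁, C) (and 0 if 𝒞 is empty). If Ã = C₁ ∪ {x} with x ∉ C₁, then |F*(C₁, 𝒞) - F*(Ã, 𝒞)| ≤ 1/|C₁|. -/
open Finset

variable {α : Type*} [DecidableEq α]

lemma jac_diff_le {α : Type*} [DecidableEq α] (C₁ C : Finset α) (hne : C₁.Nonempty)
    (x : α) (hx : x ∉ C₁) :
    |jac C₁ C - jac (insert x C₁) C| ≤ 1 / (C₁.card : ℝ) := by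
  have hn : (0:ℝ) < C₁.card := by exact_mod_cast card_pos.mpr hne
  have hu : (C₁.card : ℝ) ≤ (C₁ ∪ C).card := by
    exact_mod_cast card_le_card subset_union_left
  have hu0 : (0:ℝ) < (C₁ ∪ C).card := lt_of_lt_of_le hn hu
  have hi : ((C₁ ∩ C).card : ℝ) ≤ (C₁ ∪ C).card := by
    exact_mod_cast card_le_card (inter_subset_left.trans subset_union_left)
  have hi0 : (0:ℝ) ≤ (C₁ ∩ C).card := Nat.cast_nonneg _
  by_cases hxC : x ∈ C
  · have h1 : insert x C₁ ∪ C = C₁ ∪ C := by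
      rw [insert_union, insert_eq_self.mpr (mem_union_right _ hxC)]
    have h2 : insert x C₁ ∩ C = insert x (C₁ ∩ C) := insert_inter_of_mem hxC
    have h3 : (insert x (C₁ ∩ C)).card = (C₁ ∩ C).card + 1 :=
      card_insert_of_notMem (fun h => hx (mem_inter.mp h).1)
    unfold jac
    rw [h1, h2, h3]
    push_cast
    rw [show ((C₁ ∩ C).card : ℝ) / ((C₁ ∪ C).card : ℝ)
        - (((C₁ ∩ C).card : ℝ) + 1) / ((C₁ ∪ C).card : ℝ)
        = -(1 / ((C₁ ∪ C).card : ℝ)) by ring, abs_neg,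
      abs_of_nonneg (by positivity)]
    exact one_div_le_one_div_of_le hn hu
  · have h2 : insert x C₁ ∩ C = C₁ ∩ C := insert_inter_of_notMem hxC
    have h1 : insert x C₁ ∪ C = insert x (C₁ ∪ C) := insert_union x C₁ C
    have h3 : (insert x (C₁ ∪ C)).card = (C₁ ∪ C).card + 1 :=
      card_insert_of_notMem (by simp [hx, hxC])
    unfold jac
    rw [h1, h2, h3]
    push_cast
    set i := ((C₁ ∩ C).card : ℝ)
    set u := ((C₁ ∪ C).card : ℝ)
    have hdiff : i / u - i / (u + 1) = i / (u * (u + 1)) := by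
      field_simp; ring
    rw [hdiff, abs_of_nonneg (by positivity)]
    rw [div_le_div_iff₀ (by positivity) hn]
    nlinarith

theorem stmt7 {α : Type*} [DecidableEq α] (X : Finset α)
    (𝒞 : Finset (Finset α)) (h𝒞 : ∀ C ∈ 𝒞, C ⊆ X ∧ C.Nonempty)
    (C₁ : Finset α) (hC₁ : C₁ ⊆ X) (hC₁ne : C₁.Nonempty)
    (x : α) (hxX : x ∈ X) (hx : x ∉ C₁) :
    |bestMatch C₁ 𝒞 - bestMatch (insert x C₁) 𝒞| ≤ 1 / (C₁.card : ℝ) := by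
  by_cases h : 𝒞.Nonempty
  · obtain ⟨C, hC, hCeq⟩ := exists_mem_eq_sup' h (fun C => jac C₁ C)
    obtain ⟨D, hD, hDeq⟩ := exists_mem_eq_sup' h (fun C => jac (insert x C₁) C)
    rw [bestMatch, bestMatch, dif_pos h, dif_pos h, abs_sub_le_iff]
    constructor
    · rw [hCeq]
      have h1 := (abs_sub_le_iff.mp (jac_diff_le C₁ C hC₁ne x hx)).1
      have h2 : jac (insert x C₁) C ≤ 𝒞.sup' h (fun C => jac (insert x C₁) C) :=
        le_sup' _ hC
      linarith
    · rw [hDeq]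
      have h1 := (abs_sub_le_iff.mp (jac_diff_le C₁ D hC₁ne x hx)).2
      have h2 : jac C₁ D ≤ 𝒞.sup' h (fun C => jac C₁ C) := le_sup' _ hD
      linarith
  · simp [bestMatch, h]
end

section
/- Let 𝒞⁽¹⁾ and 𝒞⁽²⁾ be clusterings of X, let A = Σ_{C ∈ 𝒞⁽¹⁾} |C|, and let 𝒞̃⁽¹⁾ be obtained from 𝒞⁽¹⁾ by replacing one cluster C₁ with C₁ ∪ {x} for some x ∉ C₁ (with C₁ ∪ {x} ∉ 𝒞⁽¹⁾). Then |F̂*_w(𝒞⁽¹⁾, 𝒞⁽²⁾) - F̂*_w(𝒞̃⁽¹⁾, 𝒞⁽²⁾)| ≤ 3/(A+1). -/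
open Finset

variable {α : Type*} [DecidableEq α]

lemma jac_nonneg (A B : Finset α) : 0 ≤ jac A B := by
  unfold jac; positivity

lemma jac_le_one (A B : Finset α) : jac A B ≤ 1 := by
  unfold jac
  apply div_le_one_of_le₀
  · exact_mod_cast Finset.card_le_card (Finset.inter_subset_union)
  · positivity

lemma jac_insert_close (C : Finset α) (x : α) (hx : x ∉ C) (D : Finset α) :
    |jac C D - jac (insert x C) D| ≤ 1 / ((C.card : ℝ) + 1) := by
  have hiu : ((C ∩ D).card : ℝ) ≤ ((C ∪ D).card : ℝ) := by
    exact_mod_cast Finset.card_le_card Finset.inter_subset_union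
  have hcu : ((C.card : ℝ)) ≤ ((C ∪ D).card : ℝ) := by
    exact_mod_cast Finset.card_le_card Finset.subset_union_left
  by_cases hxD : x ∈ D
  · have hunion : insert x C ∪ D = C ∪ D := by
      rw [Finset.insert_union, Finset.insert_eq_self.2 (Finset.mem_union_right _ hxD)]
    have hinter : insert x C ∩ D = insert x (C ∩ D) := by
      ext a; by_cases ha : a = x <;> simp [ha, hxD]
    have hxCD : x ∉ C ∩ D := fun h => hx (Finset.mem_of_mem_inter_left h)
    have hsub : insert x C ⊆ C ∪ D := by
      apply Finset.insert_subset (Finset.mem_union_right _ hxD) Finset.subset_union_left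
    have hcard : (C.card : ℝ) + 1 ≤ ((C ∪ D).card : ℝ) := by
      have := Finset.card_le_card hsub
      rw [Finset.card_insert_of_notMem hx] at this
      exact_mod_cast this
    have hu0 : (0:ℝ) < ((C ∪ D).card : ℝ) := by linarith [Nat.cast_nonneg (α := ℝ) C.card]
    unfold jac
    rw [hunion, hinter, Finset.card_insert_of_notMem hxCD]
    push_cast
    rw [div_sub_div_same]
    have : ((C ∩ D).card : ℝ) - (((C ∩ D).card : ℝ) + 1) = -1 := by ring
    rw [this, abs_div, abs_neg, abs_one, abs_of_pos hu0]
    rw [div_le_div_iff₀ hu0 (by positivity)]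
    linarith
  · have hunion : insert x C ∪ D = insert x (C ∪ D) := by
      rw [Finset.insert_union]
    have hinter : insert x C ∩ D = C ∩ D := by
      ext a; by_cases ha : a = x <;> simp [ha, hxD, hx]
    have hxCD : x ∉ C ∪ D := by simp [hx, hxD]
    unfold jac
    rw [hunion, hinter, Finset.card_insert_of_notMem hxCD]
    push_cast
    set i := ((C ∩ D).card : ℝ)
    set u := ((C ∪ D).card : ℝ)
    have hi0 : 0 ≤ i := Nat.cast_nonneg _
    have hc0 : (0:ℝ) ≤ C.card := Nat.cast_nonneg _
    rcases eq_or_lt_of_le (Nat.cast_nonneg (α := ℝ) (C ∪ D).card) with h0 | hu0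
    · have hu : u = 0 := h0.symm
      have hi : i = 0 := le_antisymm (hu ▸ hiu) hi0
      rw [hu, hi]
      simp
      positivity
    · have : i / u - i / (u + 1) = i / (u * (u + 1)) := by
        rw [div_sub_div _ _ (show u ≠ 0 from ne_of_gt hu0) (show u + 1 ≠ 0 by positivity)]
        ring
      rw [this, abs_of_nonneg (by positivity)]
      rw [div_le_div_iff₀ (by positivity) (by positivity)]
      nlinarith

lemma bestMatch_nonneg (A : Finset α) (𝒞 : Finset (Finset α)) : 0 ≤ bestMatch A 𝒞 := by
  unfold bestMatch
  split
  · rename_i h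
    obtain ⟨C, hC⟩ := h
    exact le_trans (jac_nonneg A C) (Finset.le_sup' _ hC)
  · exact le_refl 0

lemma bestMatch_le_one (A : Finset α) (𝒞 : Finset (Finset α)) : bestMatch A 𝒞 ≤ 1 := by
  unfold bestMatch
  split
  · exact Finset.sup'_le _ _ fun C _ => jac_le_one A C
  · norm_num

lemma bestMatch_insert_close (C : Finset α) (x : α) (hx : x ∉ C) (𝒞 : Finset (Finset α)) :
    |bestMatch C 𝒞 - bestMatch (insert x C) 𝒞| ≤ 1 / ((C.card : ℝ) + 1) := by
  unfold bestMatch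
  split
  · rename_i h
    rw [abs_le]
    constructor
    · rw [neg_le, neg_sub, sub_le_iff_le_add]
      apply Finset.sup'_le
      intro D hD
      have := abs_le.1 (jac_insert_close C x hx D)
      calc jac (insert x C) D ≤ jac C D + 1 / ((C.card : ℝ) + 1) := by linarith [this.1]
        _ ≤ _ := by
            have := Finset.le_sup' (fun D => jac C D) hD
            linarith
    · rw [sub_le_iff_le_add]
      apply Finset.sup'_le
      intro D hD
      have := abs_le.1 (jac_insert_close C x hx D)
      calc jac C D ≤ jac (insert x C) D + 1 / ((C.card : ℝ) + 1) := by linarith [this.2]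
        _ ≤ _ := by
            have := Finset.le_sup' (fun D => jac (insert x C) D) hD
            linarith
  · simp
    positivity

lemma fhatw_eq (𝒞 𝒟 : Finset (Finset α)) :
    fhatw 𝒞 𝒟 = (∑ C ∈ 𝒞, (C.card : ℝ) * bestMatch C 𝒟) / (∑ C' ∈ 𝒞, (C'.card : ℝ)) := by
  unfold fhatw
  rw [Finset.sum_div]
  exact Finset.sum_congr rfl fun C _ => by rw [div_mul_eq_mul_div]

theorem stmt8 {α : Type*} [DecidableEq α]
    (𝒞₁ 𝒞₂ : Finset (Finset α))
    (h𝒞₁ : ∀ C ∈ 𝒞₁, C.Nonempty) (h𝒞₂ : ∀ C ∈ 𝒞₂, C.Nonempty)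
    (C₁ : Finset α) (hC₁ : C₁ ∈ 𝒞₁)
    (x : α) (hx : x ∉ C₁) (hnew : insert x C₁ ∉ 𝒞₁) :
    |fhatw 𝒞₁ 𝒞₂ - fhatw (insert (insert x C₁) (𝒞₁.erase C₁)) 𝒞₂| ≤
      3 / ((∑ C ∈ 𝒞₁, (C.card : ℝ)) + 1) := by
  have hC₁ne := h𝒞₁ C₁ hC₁
  set c : ℝ := (C₁.card : ℝ) with hcdef
  have hc1 : 1 ≤ c := by
    rw [hcdef]
    exact_mod_cast Finset.card_pos.2 hC₁ne
  set A : ℝ := ∑ C ∈ 𝒞₁, (C.card : ℝ) with hAdef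
  have hxe : insert x C₁ ∉ 𝒞₁.erase C₁ := fun h => hnew (Finset.mem_of_mem_erase h)
  have hcA : c ≤ A := Finset.single_le_sum (f := fun C => ((C.card : ℝ))) (fun C _ => Nat.cast_nonneg _) hC₁
  have hA1 : (1:ℝ) ≤ A := le_trans hc1 hcA
  have hA0 : (0:ℝ) < A := by linarith
  set F₁ := bestMatch C₁ 𝒞₂ with hF₁def
  set F₂ := bestMatch (insert x C₁) 𝒞₂ with hF₂def
  set R : ℝ := ∑ C ∈ 𝒞₁.erase C₁, (C.card : ℝ) * bestMatch C 𝒞₂ with hRdef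
  have hR0 : 0 ≤ R :=
    Finset.sum_nonneg fun C _ => mul_nonneg (Nat.cast_nonneg _) (bestMatch_nonneg _ _)
  have hRA : R ≤ A - c := by
    have h1 : R ≤ ∑ C ∈ 𝒞₁.erase C₁, (C.card : ℝ) :=
      Finset.sum_le_sum fun C _ =>
        mul_le_of_le_one_right (Nat.cast_nonneg _) (bestMatch_le_one _ _)
    have h2 : ∑ C ∈ 𝒞₁.erase C₁, (C.card : ℝ) = A - c := Finset.sum_erase_eq_sub hC₁
    linarith
  have hF₁0 : 0 ≤ F₁ := bestMatch_nonneg _ _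
  have hF₁1 : F₁ ≤ 1 := bestMatch_le_one _ _
  have hF₂0 : 0 ≤ F₂ := bestMatch_nonneg _ _
  have hF₂1 : F₂ ≤ 1 := bestMatch_le_one _ _
  have hc10 : (0:ℝ) < c + 1 := by linarith
  have hd := abs_le.1 (bestMatch_insert_close C₁ x hx 𝒞₂)
  have hd1 : (c + 1) * (F₁ - F₂) ≤ 1 := by
    have h2 := (le_div_iff₀ hc10).1 hd.2
    linarith
  have hd2 : -1 ≤ (c + 1) * (F₁ - F₂) := by
    have h1 : -1 / (c + 1) ≤ F₁ - F₂ := by rw [neg_div]; exact hd.1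
    have h2 := (div_le_iff₀ hc10).1 h1
    linarith
  have hsum1 : fhatw 𝒞₁ 𝒞₂ = (R + c * F₁) / A := by
    rw [fhatw_eq]
    have hnum : ∑ C ∈ 𝒞₁, (C.card : ℝ) * bestMatch C 𝒞₂ = c * F₁ + R :=
      (Finset.add_sum_erase _ _ hC₁).symm
    rw [hnum, ← hAdef]
    ring
  have hsum2 : fhatw (insert (insert x C₁) (𝒞₁.erase C₁)) 𝒞₂ = (R + (c + 1) * F₂) / (A + 1) := by
    rw [fhatw_eq, Finset.sum_insert hxe, Finset.sum_insert hxe]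
    have hcard : ((insert x C₁).card : ℝ) = c + 1 := by
      rw [Finset.card_insert_of_notMem hx]; push_cast; rfl
    have hden : ∑ C ∈ 𝒞₁.erase C₁, (C.card : ℝ) = A - c := Finset.sum_erase_eq_sub hC₁
    rw [hcard, hden, ← hRdef, ← hF₂def]
    have : c + 1 + (A - c) = A + 1 := by ring
    rw [this]
    ring
  rw [hsum1, hsum2]
  have hA10 : (0:ℝ) < A + 1 := by linarith
  have e1 : (R + c * F₁) / A - (R + (c + 1) * F₂) / (A + 1)
      = (R + c * F₁ + A * ((c + 1) * (F₁ - F₂) - F₁)) / (A * (A + 1)) := by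
    rw [div_sub_div _ _ hA0.ne' hA10.ne']
    ring
  have e2 : (3:ℝ) / (A + 1) = (3 * A) / (A * (A + 1)) := by
    rw [mul_comm (3:ℝ) A, mul_div_mul_left _ _ hA0.ne']
  rw [e1, e2]
  have hnum : |R + c * F₁ + A * ((c + 1) * (F₁ - F₂) - F₁)| ≤ 3 * A := by
    rw [abs_le]
    constructor
    · linarith [mul_le_mul_of_nonneg_left hd2 hA0.le, mul_nonneg hA0.le hF₁0,
        mul_le_mul_of_nonneg_left hF₁1 hA0.le, mul_nonneg hR0 hF₁0,
        mul_le_of_le_one_right (le_trans zero_le_one hc1) hF₁1,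
        mul_nonneg (le_trans zero_le_one hc1 : (0:ℝ) ≤ c) hF₁0]
    · linarith [mul_le_mul_of_nonneg_left hd1 hA0.le, mul_nonneg hA0.le hF₁0,
        mul_le_of_le_one_right (le_trans zero_le_one hc1) hF₁1]
  rw [abs_div, abs_of_pos (mul_pos hA0 hA10)]
  exact (div_le_div_iff_of_pos_right (mul_pos hA0 hA10)).2 hnum
end

section
/- Let 𝒞⁽¹⁾, 𝒞⁽²⁾ be clusterings of X, B = Σ_{C ∈ 𝒞⁽²⁾}|C|, and let 𝒞̃⁽¹⁾ be obtained from 𝒞⁽¹⁾ by replacing C₁ ∈ 𝒞⁽¹⁾ with C̃ = C₁ ∪ {x}, x ∉ C₁. Let γ be the number of clusters C ∈ 𝒞⁽²⁾ such that x ∈ C or C achieves the maximum F*(C, 𝒞⁽¹⁾) at C₁. Then |F̂*_w(𝒞⁽²⁾, 𝒞⁽¹⁾) - F̂*_w(𝒞⁽²⁾, 𝒞̃⁽¹⁾)| ≤ γ/B. -/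
open Finset

variable {α : Type*} [DecidableEq α]

lemma jac_insert_le {C C₁ : Finset α} {x : α} (hxC : x ∉ C) :
    jac C (insert x C₁) ≤ jac C C₁ := by
  have h1 : C ∩ insert x C₁ = C ∩ C₁ := by
    ext y; simp only [mem_inter, mem_insert]
    constructor
    · rintro ⟨hy, rfl | hy'⟩
      · exact absurd hy hxC
      · exact ⟨hy, hy'⟩
    · rintro ⟨hy, hy'⟩; exact ⟨hy, Or.inr hy'⟩
  rcases (C ∪ C₁).eq_empty_or_nonempty with h | h
  · rw [Finset.union_eq_empty] at h
    simp [jac, h.1, h.2]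
  · unfold jac
    rw [h1]
    apply div_le_div_of_nonneg_left (by positivity)
    · exact_mod_cast Finset.card_pos.mpr h
    · exact_mod_cast card_le_card (by
        intro y hy; simp only [mem_union, mem_insert] at *; tauto)

lemma abs_jac_insert_sub {C C₁ : Finset α} {x : α} (hC : C.Nonempty) (hx : x ∉ C₁) :
    |jac C (insert x C₁) - jac C C₁| ≤ 1 / (C.card : ℝ) := by
  have hu : C ⊆ C ∪ C₁ := subset_union_left
  have hcpos : (0 : ℝ) < C.card := by exact_mod_cast Finset.card_pos.mpr hC
  have hupos : (0 : ℝ) < ((C ∪ C₁).card : ℝ) := by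
    exact_mod_cast Finset.card_pos.mpr (hC.mono hu)
  have hcu : (C.card : ℝ) ≤ ((C ∪ C₁).card : ℝ) := by exact_mod_cast card_le_card hu
  have hau : ((C ∩ C₁).card : ℝ) ≤ ((C ∪ C₁).card : ℝ) := by
    exact_mod_cast card_le_card (inter_subset_union)
  by_cases hxC : x ∈ C
  · have h1 : C ∩ insert x C₁ = insert x (C ∩ C₁) := by
      ext y; simp only [mem_inter, mem_insert]; constructor
      · rintro ⟨hy, rfl | hy'⟩
        exacts [Or.inl rfl, Or.inr ⟨hy, hy'⟩]
      · rintro (rfl | ⟨hy, hy'⟩)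
        exacts [⟨hxC, Or.inl rfl⟩, ⟨hy, Or.inr hy'⟩]
    have h2 : C ∪ insert x C₁ = C ∪ C₁ := by
      ext y; simp only [mem_union, mem_insert]; constructor
      · rintro (hy | rfl | hy)
        exacts [Or.inl hy, Or.inl hxC, Or.inr hy]
      · rintro (hy | hy); exacts [Or.inl hy, Or.inr (Or.inr hy)]
    have h3 : (insert x (C ∩ C₁)).card = (C ∩ C₁).card + 1 := by
      rw [Finset.card_insert_of_notMem (fun h => hx (mem_inter.mp h).2)]
    unfold jac
    rw [h1, h2, h3]
    push_cast
    rw [div_sub_div_same]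
    have h4 : ((C ∩ C₁).card : ℝ) + 1 - (C ∩ C₁).card = 1 := by ring
    rw [h4, abs_of_nonneg (by positivity)]
    exact one_div_le_one_div_of_le hcpos hcu
  · have h1 : C ∩ insert x C₁ = C ∩ C₁ := by
      ext y; simp only [mem_inter, mem_insert]; constructor
      · rintro ⟨hy, rfl | hy'⟩
        · exact absurd hy hxC
        · exact ⟨hy, hy'⟩
      · rintro ⟨hy, hy'⟩; exact ⟨hy, Or.inr hy'⟩
    have h2 : C ∪ insert x C₁ = insert x (C ∪ C₁) := by
      ext y; simp only [mem_union, mem_insert]; tauto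
    have h3 : (insert x (C ∪ C₁)).card = (C ∪ C₁).card + 1 := by
      rw [Finset.card_insert_of_notMem (by simp [hxC, hx])]
    unfold jac
    rw [h1, h2, h3]
    push_cast
    set a : ℝ := ((C ∩ C₁).card : ℝ) with ha
    set u : ℝ := ((C ∪ C₁).card : ℝ) with hu'
    have hanneg : 0 ≤ a := by positivity
    have key : a / (u + 1) - a / u = -(a / (u * (u + 1))) := by
      field_simp; ring
    rw [key, abs_neg, abs_of_nonneg (by positivity)]
    rw [div_le_div_iff₀ (by positivity) hcpos]
    nlinarith

lemma bestMatch_singleton (A C' : Finset α) : bestMatch A {C'} = jac A C' := by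
  rw [bestMatch, dif_pos (singleton_nonempty _)]
  exact Finset.sup'_singleton ..

lemma bestMatch_insert {s : Finset (Finset α)} (hs : s.Nonempty) (A C' : Finset α) :
    bestMatch A (insert C' s) = max (jac A C') (bestMatch A s) := by
  rw [bestMatch, bestMatch, dif_pos (insert_nonempty _ _), dif_pos hs,
    Finset.sup'_insert hs]

lemma bestMatch_eq_max {𝒞₁ : Finset (Finset α)} {C₁ : Finset α} (hC₁ : C₁ ∈ 𝒞₁)
    (he : (𝒞₁.erase C₁).Nonempty) (A : Finset α) :
    bestMatch A 𝒞₁ = max (jac A C₁) (bestMatch A (𝒞₁.erase C₁)) := by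
  conv_lhs => rw [← Finset.insert_erase hC₁]
  exact bestMatch_insert he A C₁

lemma eq_singleton_of_erase_eq_empty {𝒞₁ : Finset (Finset α)} {C₁ : Finset α}
    (hC₁ : C₁ ∈ 𝒞₁) (he : 𝒞₁.erase C₁ = ∅) : 𝒞₁ = {C₁} := by
  rcases (Finset.erase_eq_empty_iff _ _).mp he with h | h
  · exact absurd hC₁ (by simp [h])
  · exact h

lemma bestMatch_key {𝒞₁ : Finset (Finset α)} {C₁ : Finset α} (hC₁ : C₁ ∈ 𝒞₁)
    (C : Finset α) (C' : Finset α) :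
    |bestMatch C 𝒞₁ - bestMatch C (insert C' (𝒞₁.erase C₁))| ≤ |jac C C₁ - jac C C'| := by
  rcases (𝒞₁.erase C₁).eq_empty_or_nonempty with he | he
  · have h1 := eq_singleton_of_erase_eq_empty hC₁ he
    subst h1
    rw [Finset.erase_singleton, bestMatch_singleton]
    rw [show (insert C' (∅ : Finset (Finset α))) = {C'} from rfl, bestMatch_singleton]
  · rw [bestMatch_eq_max hC₁ he, bestMatch_insert he]
    exact abs_max_sub_max_le_abs _ _ _

lemma jac_le_bestMatch {𝒞₁ : Finset (Finset α)} {C₁ : Finset α} (hC₁ : C₁ ∈ 𝒞₁)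
    (C : Finset α) : jac C C₁ ≤ bestMatch C 𝒞₁ := by
  rw [bestMatch, dif_pos ⟨C₁, hC₁⟩]
  exact Finset.le_sup' _ hC₁

lemma bestMatch_unchanged {𝒞₁ : Finset (Finset α)} {C₁ : Finset α} (hC₁ : C₁ ∈ 𝒞₁)
    {C : Finset α} {x : α} (hxC : x ∉ C)
    (hne : jac C C₁ ≠ bestMatch C 𝒞₁) :
    bestMatch C (insert (insert x C₁) (𝒞₁.erase C₁)) = bestMatch C 𝒞₁ := by
  have hlt : jac C C₁ < bestMatch C 𝒞₁ := lt_of_le_of_ne (jac_le_bestMatch hC₁ C) hne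
  rcases (𝒞₁.erase C₁).eq_empty_or_nonempty with he | he
  · exfalso
    rw [eq_singleton_of_erase_eq_empty hC₁ he, bestMatch_singleton] at hlt
    exact lt_irrefl _ hlt
  · rw [bestMatch_insert he, bestMatch_eq_max hC₁ he]
    rw [bestMatch_eq_max hC₁ he] at hlt
    set M := bestMatch C (𝒞₁.erase C₁)
    have hM : jac C C₁ < M := by
      by_contra h
      push_neg at h
      rw [max_eq_left h] at hlt
      exact lt_irrefl _ hlt
    have hM' : jac C (insert x C₁) ≤ M := le_trans (jac_insert_le hxC) hM.le
    rw [max_eq_right hM', max_eq_right hM.le]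

open scoped Classical in
theorem stmt9 {α : Type*} [DecidableEq α]
    (𝒞₁ 𝒞₂ : Finset (Finset α))
    (h𝒞₁ : ∀ C ∈ 𝒞₁, C.Nonempty) (h𝒞₂ : ∀ C ∈ 𝒞₂, C.Nonempty)
    (C₁ : Finset α) (hC₁ : C₁ ∈ 𝒞₁)
    (x : α) (hx : x ∉ C₁) (hnew : insert x C₁ ∉ 𝒞₁) :
    |fhatw 𝒞₂ 𝒞₁ - fhatw 𝒞₂ (insert (insert x C₁) (𝒞₁.erase C₁))| ≤
      ((𝒞₂.filter (fun C => x ∈ C ∨ jac C C₁ = bestMatch C 𝒞₁)).card : ℝ) /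
        (∑ C ∈ 𝒞₂, (C.card : ℝ)) := by
  rcases 𝒞₂.eq_empty_or_nonempty with h2 | h2
  · simp [h2, fhatw]
  set B : ℝ := ∑ C ∈ 𝒞₂, (C.card : ℝ) with hB
  have hBpos : 0 < B := by
    apply Finset.sum_pos _ h2
    intro C hC
    exact_mod_cast Finset.card_pos.mpr (h𝒞₂ C hC)
  have hdiff : fhatw 𝒞₂ 𝒞₁ - fhatw 𝒞₂ (insert (insert x C₁) (𝒞₁.erase C₁))
      = ∑ C ∈ 𝒞₂, ((C.card : ℝ) / B) *
        (bestMatch C 𝒞₁ - bestMatch C (insert (insert x C₁) (𝒞₁.erase C₁))) := by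
    rw [fhatw, fhatw, ← Finset.sum_sub_distrib]
    exact Finset.sum_congr rfl (fun C _ => by ring)
  rw [hdiff]
  calc |∑ C ∈ 𝒞₂, ((C.card : ℝ) / B) *
        (bestMatch C 𝒞₁ - bestMatch C (insert (insert x C₁) (𝒞₁.erase C₁)))|
      ≤ ∑ C ∈ 𝒞₂, |((C.card : ℝ) / B) *
        (bestMatch C 𝒞₁ - bestMatch C (insert (insert x C₁) (𝒞₁.erase C₁)))| :=
        Finset.abs_sum_le_sum_abs _ _
    _ ≤ ∑ C ∈ 𝒞₂, (if x ∈ C ∨ jac C C₁ = bestMatch C 𝒞₁ then 1 / B else 0) := by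
        apply Finset.sum_le_sum
        intro C hC
        by_cases hP : x ∈ C ∨ jac C C₁ = bestMatch C 𝒞₁
        · rw [if_pos hP, abs_mul]
          have hcpos : (0 : ℝ) < C.card := by
            exact_mod_cast Finset.card_pos.mpr (h𝒞₂ C hC)
          have h1 : |(C.card : ℝ) / B| = (C.card : ℝ) / B :=
            abs_of_nonneg (div_nonneg (Nat.cast_nonneg _) hBpos.le)
          rw [h1]
          have h2 : |bestMatch C 𝒞₁ - bestMatch C (insert (insert x C₁) (𝒞₁.erase C₁))|
              ≤ 1 / (C.card : ℝ) := by
            refine le_trans (bestMatch_key hC₁ C (insert x C₁)) ?_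
            rw [abs_sub_comm]
            exact abs_jac_insert_sub (h𝒞₂ C hC) hx
          calc (C.card : ℝ) / B * |bestMatch C 𝒞₁ -
                bestMatch C (insert (insert x C₁) (𝒞₁.erase C₁))|
              ≤ (C.card : ℝ) / B * (1 / (C.card : ℝ)) := by
                apply mul_le_mul_of_nonneg_left h2
                exact div_nonneg (Nat.cast_nonneg _) hBpos.le
            _ = 1 / B := by
                rw [div_mul_div_comm, mul_one, mul_comm B (C.card : ℝ)]
                rw [div_mul_cancel_left₀ (ne_of_gt hcpos) B, one_div]
        · rw [if_neg hP]
          push_neg at hP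
          rw [bestMatch_unchanged hC₁ hP.1 hP.2, sub_self, mul_zero, abs_zero]
    _ = ((𝒞₂.filter (fun C => x ∈ C ∨ jac C C₁ = bestMatch C 𝒞₁)).card : ℝ) / B := by
        rw [← Finset.sum_filter, Finset.sum_const, nsmul_eq_mul]
        rw [mul_one_div]
end

section
/- The dissimilarity 1 - F*_wo fails the triangle inequality: for X = {1,2,3}, 𝒞⁽¹⁾ = {{1,2,3}}, 𝒞⁽²⁾ = {{1},{1,2,3}}, 𝒞⁽³⁾ = {{1},{2,3}}, one has M(𝒞⁽¹⁾,𝒞⁽²⁾) = 1/12, M(𝒞⁽²⁾,𝒞⁽³⁾) = 17/72, M(𝒞⁽¹⁾,𝒞⁽³⁾) = 7/18, and M(𝒞⁽¹⁾,𝒞⁽²⁾) + M(𝒞⁽²⁾,𝒞⁽³⁾) < M(𝒞⁽¹⁾,𝒞⁽³⁾). -/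
open Finset

variable {α : Type*} [DecidableEq α]

lemma jacval (A B : Finset ℕ) (m n : ℕ) (h1 : (A ∩ B).card = m) (h2 : (A ∪ B).card = n) :
    jac A B = (m : ℝ) / (n : ℝ) := by rw [jac, h1, h2]

lemma j1 : jac ({1,2,3} : Finset ℕ) {1} = 1/3 := by rw [jacval _ _ 1 3 (by decide) (by decide)]; norm_num
lemma j2 : jac ({1,2,3} : Finset ℕ) {1,2,3} = 1 := by
  rw [jacval _ _ 3 3 (by decide) (by decide)]; norm_num
lemma j3 : jac ({1,2,3} : Finset ℕ) {2,3} = 2/3 := by rw [jacval _ _ 2 3 (by decide) (by decide)]; norm_num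
lemma j4 : jac ({1} : Finset ℕ) {1} = 1 := by rw [jacval _ _ 1 1 (by decide) (by decide)]; norm_num
lemma j5 : jac ({1} : Finset ℕ) {1,2,3} = 1/3 := by rw [jacval _ _ 1 3 (by decide) (by decide)]; norm_num
lemma j6 : jac ({1} : Finset ℕ) {2,3} = 0 := by
  rw [jacval _ _ 0 3 (by decide) (by decide)]; norm_num
lemma j7 : jac ({2,3} : Finset ℕ) {1} = 0 := by
  rw [jacval _ _ 0 3 (by decide) (by decide)]; norm_num
lemma j8 : jac ({2,3} : Finset ℕ) {1,2,3} = 2/3 := by rw [jacval _ _ 2 3 (by decide) (by decide)]; norm_num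

theorem stmt11 :
    let C1 : Finset (Finset ℕ) := {{1, 2, 3}}
    let C2 : Finset (Finset ℕ) := {{1}, {1, 2, 3}}
    let C3 : Finset (Finset ℕ) := {{1}, {2, 3}}
    let M : Finset (Finset ℕ) → Finset (Finset ℕ) → ℝ := fun 𝒞 𝒟 => 1 - fw 𝒞 𝒟
    M C1 C2 = 1 / 12 ∧ M C2 C3 = 17 / 72 ∧ M C1 C3 = 7 / 18 ∧
      M C1 C2 + M C2 C3 < M C1 C3 := by
  intro C1 C2 C3 M
  have hmem : ({1} : Finset ℕ) ∉ ({{1,2,3}} : Finset (Finset ℕ)) := by decide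
  have hmem2 : ({1} : Finset ℕ) ∉ ({{2,3}} : Finset (Finset ℕ)) := by decide
  simp only [M, fw, fhatw, C1, C2, C3, bestMatch, Finset.sum_insert hmem,
    Finset.sum_insert hmem2, Finset.sum_singleton,
    Finset.insert_nonempty, Finset.singleton_nonempty, dif_pos,
    Finset.sup'_insert, Finset.sup'_singleton, j1, j2, j3, j4, j5, j6, j7, j8]
  have hc1 : (({1,2,3} : Finset ℕ).card : ℝ) = 3 := by norm_num
  have hc2 : (({1} : Finset ℕ).card : ℝ) = 1 := by norm_num
  have hc3 : (({2,3} : Finset ℕ).card : ℝ) = 2 := by norm_num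
  rw [hc1, hc2, hc3]
  norm_num [max_def]
end

section
/- Let 𝒞⁽¹⁾, 𝒞⁽²⁾ be clusterings, 𝒞̂⁽¹⁾ = 𝒞⁽¹⁾ ∪ {{x}}, B = Σ_{C∈𝒞⁽²⁾}|C|, and Γ = |{C ∈ 𝒞⁽²⁾ : x ∈ C}|. Then |F̂*_w(𝒞⁽²⁾, 𝒞⁽¹⁾) - F̂*_w(𝒞⁽²⁾, 𝒞̂⁽¹⁾)| ≤ Γ/B. -/
open Finset

variable {α : Type*} [DecidableEq α]

lemma jac_singleton (C : Finset α) (x : α) :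
    jac C {x} = if x ∈ C then (1:ℝ) / C.card else 0 := by
  unfold jac
  by_cases h : x ∈ C
  · simp [h, Finset.inter_singleton_of_mem h,
      Finset.union_eq_left.mpr (Finset.singleton_subset_iff.mpr h)]
  · rw [Finset.inter_singleton_of_notMem h, if_neg h]; simp

lemma key (C : Finset α) (𝒞₁ : Finset (Finset α)) (x : α) :
    |bestMatch C 𝒞₁ - bestMatch C (insert {x} 𝒞₁)| ≤
      (if x ∈ C then (1:ℝ) / C.card else 0) := by
  rcases eq_or_ne 𝒞₁ ∅ with rfl | hne
  · have h1 : bestMatch C (insert {x} (∅ : Finset (Finset α))) = jac C {x} := by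
      simp [bestMatch]
    have h0 : bestMatch C (∅ : Finset (Finset α)) = 0 := by simp [bestMatch]
    rw [h1, h0, zero_sub, abs_neg, abs_of_nonneg (jac_nonneg _ _), jac_singleton]
  · have hne' : 𝒞₁.Nonempty := Finset.nonempty_iff_ne_empty.mpr hne
    have hins : (insert ({x} : Finset α) 𝒞₁).Nonempty := Finset.insert_nonempty _ _
    set s := 𝒞₁.sup' hne' (fun D => jac C D) with hs
    have hb1 : bestMatch C 𝒞₁ = s := by simp [bestMatch, hne', hs]
    have hb2 : bestMatch C (insert {x} 𝒞₁) = jac C {x} ⊔ s := by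
      rw [bestMatch, dif_pos hins, hs]
      exact Finset.sup'_insert (b := ({x} : Finset α)) (H := hne') (f := fun D => jac C D)
    have hsnn : 0 ≤ s := by
      obtain ⟨a, ha⟩ := hne'
      exact le_trans (jac_nonneg C a) (Finset.le_sup' _ ha)
    have hjnn := jac_nonneg C ({x} : Finset α)
    rw [hb1, hb2, abs_sub_comm, ← jac_singleton C x,
      abs_of_nonneg (by simp [le_max_right])]
    rcases max_cases (jac C {x}) s with ⟨h, _⟩ | ⟨h, _⟩ <;> rw [h] <;> linarith

set_option maxHeartbeats 1000000 in
theorem stmt19 {α : Type*} [DecidableEq α] (𝒞₁ 𝒞₂ : Finset (Finset α))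
    (hne₂ : 𝒞₂.Nonempty)
    (h𝒞₁ : ∀ C ∈ 𝒞₁, C.Nonempty) (h𝒞₂ : ∀ C ∈ 𝒞₂, C.Nonempty)
    (x : α) (hx : ({x} : Finset α) ∉ 𝒞₁) :
    |fhatw 𝒞₂ 𝒞₁ - fhatw 𝒞₂ (insert {x} 𝒞₁)| ≤
      ((𝒞₂.filter (fun C => x ∈ C)).card : ℝ) / (∑ C ∈ 𝒞₂, (C.card : ℝ)) := by
  have hB0 : (0:ℝ) < ∑ C ∈ 𝒞₂, (C.card : ℝ) := by
    obtain ⟨a, ha⟩ := hne₂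
    refine Finset.sum_pos' (fun i _ => Nat.cast_nonneg _) ⟨a, ha, ?_⟩
    exact_mod_cast (h𝒞₂ a ha).card_pos
  set B := ∑ C ∈ 𝒞₂, (C.card : ℝ) with hB
  have hdiff : fhatw 𝒞₂ 𝒞₁ - fhatw 𝒞₂ (insert {x} 𝒞₁)
      = ∑ C ∈ 𝒞₂, ((C.card : ℝ) / B) * (bestMatch C 𝒞₁ - bestMatch C (insert {x} 𝒞₁)) := by
    unfold fhatw
    rw [← hB, ← Finset.sum_sub_distrib]
    exact Finset.sum_congr rfl (fun C _ => by ring)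
  rw [hdiff]
  calc |∑ C ∈ 𝒞₂, ((C.card : ℝ) / B) * (bestMatch C 𝒞₁ - bestMatch C (insert {x} 𝒞₁))|
      ≤ ∑ C ∈ 𝒞₂, |((C.card : ℝ) / B) * (bestMatch C 𝒞₁ - bestMatch C (insert {x} 𝒞₁))| :=
        Finset.abs_sum_le_sum_abs _ _
    _ ≤ ∑ C ∈ 𝒞₂, (if x ∈ C then 1 / B else 0) := by
        apply Finset.sum_le_sum
        intro C hC
        rw [abs_mul, abs_of_nonneg (div_nonneg (Nat.cast_nonneg _) hB0.le)]
        have hk := key C 𝒞₁ x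
        by_cases hxC : x ∈ C
        · simp only [hxC, if_true] at hk ⊢
          have hCpos : (0:ℝ) < C.card := by exact_mod_cast (h𝒞₂ C hC).card_pos
          calc (C.card : ℝ) / B * |bestMatch C 𝒞₁ - bestMatch C (insert {x} 𝒞₁)|
              ≤ (C.card : ℝ) / B * (1 / C.card) :=
                mul_le_mul_of_nonneg_left hk (div_nonneg (Nat.cast_nonneg _) hB0.le)
            _ = 1 / B := by
                rw [div_mul_div_comm, mul_one, mul_comm B, ← div_div, div_self hCpos.ne']
        · simp only [hxC, if_false] at hk ⊢
          have h0 : |bestMatch C 𝒞₁ - bestMatch C (insert {x} 𝒞₁)| = 0 :=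
            le_antisymm hk (abs_nonneg _)
          rw [h0, mul_zero]
    _ = ((𝒞₂.filter (fun C => x ∈ C)).card : ℝ) / B := by
        rw [← Finset.sum_filter, Finset.sum_const, nsmul_eq_mul]
        ring
end
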